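/- arXiv:1012.1394 — 6 statements merged into one kernel-verified Lean document; each statement's English description precedes it below -/
import Mathlib

section
/- Let R be a noetherian commutative ring and F : ⋯ → F₂ → F₁ → F₀ → 0 a chain complex (indexed by ℕ) of flat R-modules such that for every prime ideal p of R the complex κ(p) ⊗_R F is acyclic (H_i = 0 for all i > 0). Then for every R-module M the complex M ⊗_R F is acyclic, i.e., H_i(M ⊗_R F) = 0 for all i > 0. -/
/-!
Call `M` good (`TensorAcyclic d M`) if `M ⊗ F` is acyclic. As the `Fₙ` are flat, a short exact
sequence of modules gives one of complexes, so goodness passes to extensions; and every element of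
`M ⊗ Fₙ` comes from a finitely generated submodule of `M`. Hence, by prime filtrations, it
suffices that `R ⧸ p` is good for every prime `p`, which we prove by noetherian induction on `p`.
For `s ∉ p`, the module `(R ⧸ p) ⧸ s` is filtered by quotients `R ⧸ q` with `q ⊋ p`, hence good,
so a cycle `x` of `R ⧸ p ⊗ F` is a boundary as soon as `s • x` is. Since `κ(p)` is the
localization of `R ⧸ p` at `R ∖ p`, the acyclicity of `κ(p) ⊗ F` provides such an `s`.
-/

open TensorProduct

/-- `κ(p)`: the residue field of the localization of `R` at the prime `p`. -/
noncomputable abbrev kappa {R : Type*} [CommRing R] (p : Ideal R) [p.IsPrime] : Type _ :=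
  IsLocalRing.ResidueField (Localization.AtPrime p)

open LinearMap

section

variable {R : Type*} [CommRing R] {F : ℕ → Type*} [∀ n, AddCommGroup (F n)]
  [∀ n, Module R (F n)] {d : ∀ n, F (n + 1) →ₗ[R] F n}
variable {M N P Q : Type*} [AddCommGroup M] [Module R M] [AddCommGroup N] [Module R N]
  [AddCommGroup P] [Module R P] [AddCommGroup Q] [Module R Q]

theorem lTensor_rTensor_comm_apply (f : P →ₗ[R] Q) (g : M →ₗ[R] N) (x : M ⊗[R] P) :
    lTensor N f (rTensor P g x) = rTensor Q g (lTensor M f x) := by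
  rw [← comp_apply, ← comp_apply, lTensor_comp_rTensor, rTensor_comp_lTensor]

theorem lTensor_lTensor_eq_zero {f : N →ₗ[R] P} {g : P →ₗ[R] Q} (h : g ∘ₗ f = 0)
    (x : M ⊗[R] N) : lTensor M g (lTensor M f x) = 0 := by
  rw [← comp_apply, ← lTensor_comp, h, lTensor_zero, LinearMap.zero_apply]

theorem rTensor_lsmul_apply (s : R) (x : M ⊗[R] N) : rTensor N (lsmul R M s) x = s • x := by
  rw [show lsmul R M s = DistribSMul.toLinearMap R M s from rfl, rTensor_smul_action]
  rfl

namespace Ideal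

variable (p : Ideal R) [p.IsPrime]

theorem algebraMapSubmonoid_primeCompl_quotient :
    Algebra.algebraMapSubmonoid (R ⧸ p) p.primeCompl = nonZeroDivisors (R ⧸ p) := by
  ext x
  obtain ⟨x, rfl⟩ := Quotient.mk_surjective x
  simp only [Algebra.algebraMapSubmonoid, mem_nonZeroDivisors_iff_ne_zero, ne_eq,
    Quotient.eq_zero_iff_mem, Quotient.algebraMap_eq, Submonoid.mem_map, mem_primeCompl_iff,
    Quotient.mk_eq_mk_iff_sub_mem]
  exact ⟨fun ⟨y, hy, h⟩ hx => hy (by simpa using add_mem h hx),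
    fun h => ⟨x, h, by simp⟩⟩

theorem exists_smul_eq_rTensor_residueField (z : p.ResidueField ⊗[R] N) :
    ∃ s ∉ p, ∃ w : (R ⧸ p) ⊗[R] N,
      s • z = rTensor N (IsScalarTower.toAlgHom R (R ⧸ p) p.ResidueField).toLinearMap w := by
  have : IsLocalization (Algebra.algebraMapSubmonoid (R ⧸ p) p.primeCompl) p.ResidueField := by
    rw [algebraMapSubmonoid_primeCompl_quotient]
    infer_instance
  obtain ⟨⟨w, s⟩, h⟩ := IsLocalizedModule.surj p.primeCompl (AlgebraTensorModule.rTensor R N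
    (IsScalarTower.toAlgHom R (R ⧸ p) p.ResidueField).toLinearMap) z
  exact ⟨s, s.2, w, h⟩

variable {p} in
theorem isSMulRegular_quotient_of_notMem {s : R} (hs : s ∉ p) : IsSMulRegular (R ⧸ p) s := by
  intro x y h
  have : Quotient.mk p s ≠ 0 := by rwa [ne_eq, Quotient.eq_zero_iff_mem]
  exact mul_left_cancel₀ this (by simpa [Algebra.smul_def] using h)

omit [p.IsPrime] in
theorem lt_of_annihilator_quotSMulTop_le {s : R} (hs : s ∉ p) {q : Ideal R}
    (h : Module.annihilator R (QuotSMulTop s (R ⧸ p)) ≤ q) : p < q := by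
  have hpq : p ≤ q := calc
    p = Module.annihilator R (R ⧸ p) := p.annihilator_quotient.symm
    _ ≤ Module.annihilator R (QuotSMulTop s (R ⧸ p)) :=
      (Submodule.mkQ _).annihilator_le_of_surjective (Submodule.mkQ_surjective _)
    _ ≤ q := h
  exact lt_of_le_of_ne hpq fun hpq => hs (hpq ▸ h (QuotSMulTop.mem_annihilator (R ⧸ p) s))

end Ideal

variable (d M) in
def TensorAcyclic : Prop :=
  ∀ n, Function.Exact (lTensor M (d (n + 1))) (lTensor M (d n))

theorem exists_eq_lTensor_add_rTensor_of_rTensor_eq {f : M →ₗ[R] N} {g : N →ₗ[R] P}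
    (hfg : Function.Exact f g) (hg : Function.Surjective g) {n : ℕ} {y : N ⊗[R] F (n + 1)}
    {z : P ⊗[R] F (n + 2)} (h : rTensor _ g y = lTensor P (d (n + 1)) z) :
    ∃ y' x, y = lTensor N (d (n + 1)) y' + rTensor _ f x := by
  obtain ⟨y', rfl⟩ := rTensor_surjective (F (n + 2)) hg z
  obtain ⟨x, hx⟩ := (rTensor_exact (F (n + 1)) hfg hg (y - lTensor N (d (n + 1)) y')).mp
    (by rw [map_sub, ← lTensor_rTensor_comm_apply, h, sub_self])
  exact ⟨y', x, by rw [hx, add_sub_cancel]⟩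

namespace TensorAcyclic

theorem of_forall_exists (hd : ∀ n, d n ∘ₗ d (n + 1) = 0)
    (h : ∀ n (x : M ⊗[R] F (n + 1)), lTensor M (d n) x = 0 →
      ∃ y, lTensor M (d (n + 1)) y = x) :
    TensorAcyclic d M :=
  fun n => Function.Exact.of_comp_of_mem_range (funext (lTensor_lTensor_eq_zero (hd n))) (h n)

theorem of_subsingleton [Subsingleton M] : TensorAcyclic d M :=
  fun _ _ => ⟨fun _ => ⟨0, Subsingleton.elim _ _⟩, fun _ => Subsingleton.elim _ _⟩

theorem of_linearEquiv (e : M ≃ₗ[R] N) (h : TensorAcyclic d M) : TensorAcyclic d N := fun n =>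
  (h n).of_ladder_linearEquiv_of_exact (e₁ := e.rTensor _) (e₂ := e.rTensor _)
    (e₃ := e.rTensor _) (by ext; simp) (by ext; simp)

variable [∀ n, Module.Flat R (F n)] {f : M →ₗ[R] N} {g : N →ₗ[R] P}

theorem of_exact (hd : ∀ n, d n ∘ₗ d (n + 1) = 0) (hf : Function.Injective f)
    (hg : Function.Surjective g) (hfg : Function.Exact f g) (hM : TensorAcyclic d M)
    (hP : TensorAcyclic d P) : TensorAcyclic d N := by
  refine of_forall_exists hd fun n y hy => ?_
  obtain ⟨z, hz⟩ := (hP n (rTensor _ g y)).mp (by rw [lTensor_rTensor_comm_apply, hy, map_zero])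
  obtain ⟨y', x, rfl⟩ := exists_eq_lTensor_add_rTensor_of_rTensor_eq hfg hg hz.symm
  have hx : lTensor M (d n) x = 0 := Module.Flat.rTensor_preserves_injective_linearMap f hf <| by
    rw [← lTensor_rTensor_comm_apply, map_zero, ← hy, map_add, lTensor_lTensor_eq_zero (hd _),
      zero_add]
  obtain ⟨x', rfl⟩ := (hM n x).mp hx
  exact ⟨y' + rTensor _ f x', by rw [map_add, lTensor_rTensor_comm_apply]⟩

theorem exists_lTensor_eq_of_rTensor_eq (hP : TensorAcyclic d P)
    (hd : ∀ n, d n ∘ₗ d (n + 1) = 0) (hf : Function.Injective f)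
    (hg : Function.Surjective g) (hfg : Function.Exact f g) {n : ℕ} {x : M ⊗[R] F (n + 1)}
    {y : N ⊗[R] F (n + 2)} (h : rTensor _ f x = lTensor N (d (n + 1)) y) :
    ∃ x', lTensor M (d (n + 1)) x' = x := by
  obtain ⟨z, hz⟩ := (hP (n + 1) (rTensor _ g y)).mp <| by
    rw [lTensor_rTensor_comm_apply, ← h, ← rTensor_comp_apply, hfg.linearMap_comp_eq_zero,
      rTensor_zero, LinearMap.zero_apply]
  obtain ⟨y', x', rfl⟩ := exists_eq_lTensor_add_rTensor_of_rTensor_eq hfg hg hz.symm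
  refine ⟨x', Module.Flat.rTensor_preserves_injective_linearMap f hf ?_⟩
  rw [← lTensor_rTensor_comm_apply, h, map_add, lTensor_lTensor_eq_zero (hd _), zero_add]

theorem exists_lTensor_eq_of_smul_eq {s : R} (hQ : TensorAcyclic d (QuotSMulTop s M))
    (hd : ∀ n, d n ∘ₗ d (n + 1) = 0) (hs : IsSMulRegular M s) {n : ℕ}
    {x : M ⊗[R] F (n + 1)} {y : M ⊗[R] F (n + 2)} (h : s • x = lTensor M (d (n + 1)) y) :
    ∃ x', lTensor M (d (n + 1)) x' = x :=
  hQ.exists_lTensor_eq_of_rTensor_eq (f := lsmul R M s) hd hs (Submodule.mkQ_surjective _)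
    (exact_lsmul_mkQ_smul_top M s) (by rw [rTensor_lsmul_apply, h])

theorem exists_smul_eq_lTensor {p : Ideal R} [p.IsPrime] (hκ : TensorAcyclic d p.ResidueField)
    {n : ℕ} {x : (R ⧸ p) ⊗[R] F (n + 1)} (hx : lTensor _ (d n) x = 0) :
    ∃ s ∉ p, ∃ y, s • x = lTensor (R ⧸ p) (d (n + 1)) y := by
  set ι := (IsScalarTower.toAlgHom R (R ⧸ p) p.ResidueField).toLinearMap
  obtain ⟨z, hz⟩ := (hκ n (rTensor _ ι x)).mp <| by
    rw [lTensor_rTensor_comm_apply, hx, map_zero]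
  obtain ⟨s, hs, y, hy⟩ := p.exists_smul_eq_rTensor_residueField z
  refine ⟨s, hs, y, Module.Flat.rTensor_preserves_injective_linearMap ι
    p.injective_algebraMap_quotient_residueField ?_⟩
  rw [map_smul, ← hz, ← map_smul, hy, lTensor_rTensor_comm_apply]

theorem of_forall_finite (hd : ∀ n, d n ∘ₗ d (n + 1) = 0)
    (h : ∀ N : Submodule R M, Module.Finite R N → TensorAcyclic d N) : TensorAcyclic d M := by
  refine of_forall_exists hd fun n x hx => ?_
  obtain ⟨N, hN, hxN⟩ :=
    TensorProduct.exists_finite_submodule_left_of_setFinite {x} (Set.finite_singleton x)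
  obtain ⟨x₀, rfl⟩ := hxN rfl
  have : lTensor N (d n) x₀ = 0 := Module.Flat.rTensor_preserves_injective_linearMap
    N.subtype N.injective_subtype (by rw [← lTensor_rTensor_comm_apply, hx, map_zero])
  obtain ⟨y, rfl⟩ := (h N hN n x₀).mp this
  exact ⟨rTensor _ N.subtype y, lTensor_rTensor_comm_apply _ _ _⟩

theorem of_annihilator_le [IsNoetherianRing R] (hd : ∀ n, d n ∘ₗ d (n + 1) = 0)
    [Module.Finite R M]
    (h : ∀ q : Ideal R, q.IsPrime → Module.annihilator R M ≤ q →
      TensorAcyclic d (R ⧸ q)) :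
    TensorAcyclic d M := by
  refine IsNoetherianRing.induction_on_isQuotientEquivQuotientPrime R ‹_›
    (motive := fun N _ _ _ => Module.annihilator R M ≤ Module.annihilator R N →
      TensorAcyclic d N) ?_ ?_ ?_ le_rfl
  · intro N _ _ _ _ _
    exact of_subsingleton
  · intro N _ _ _ q e hN
    refine of_linearEquiv e.symm (h q.1 q.2 (hN.trans ?_))
    rw [e.annihilator_eq, Ideal.annihilator_quotient]
  · intro N₁ _ _ _ N₂ _ _ _ N₃ _ _ _ f g hf hg hfg h₁ h₃ hN
    exact of_exact hd hf hg hfg (h₁ (hN.trans (f.annihilator_le_of_injective hf)))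
      (h₃ (hN.trans (g.annihilator_le_of_surjective hg)))

end TensorAcyclic

open TensorAcyclic in
theorem tensorAcyclic_quotient_of_residueField [IsNoetherianRing R] [∀ n, Module.Flat R (F n)]
    (hd : ∀ n, d n ∘ₗ d (n + 1) = 0)
    (hκ : ∀ (p : Ideal R) [p.IsPrime], TensorAcyclic d p.ResidueField) (p : Ideal R)
    [hp : p.IsPrime] : TensorAcyclic d (R ⧸ p) := by
  revert hp
  induction p using IsNoetherian.induction with
  | hgt p IH =>
  intro hp
  have hQ (s : R) (hs : s ∉ p) : TensorAcyclic d (QuotSMulTop s (R ⧸ p)) :=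
    of_annihilator_le hd fun q _ hle => IH q (Ideal.lt_of_annihilator_quotSMulTop_le p hs hle)
  refine of_forall_exists hd fun n x hx => ?_
  obtain ⟨s, hs, y, hy⟩ := (hκ p).exists_smul_eq_lTensor hx
  exact (hQ s hs).exists_lTensor_eq_of_smul_eq hd (Ideal.isSMulRegular_quotient_of_notMem hs) hy

end

/-- Let `R` be a noetherian commutative ring and
`F : ⋯ → F₂ → F₁ → F₀ → 0` a chain complex (indexed by `ℕ`) of flat `R`-modules such
that `κ(p) ⊗[R] F` is acyclic (exact at every spot `F (n+1)`) for every prime ideal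
`p`.  Then for every `R`-module `M` the complex `M ⊗[R] F` is acyclic, i.e. exact at
every spot `F (n+1)`. -/
theorem stmt_1 (R : Type*) [CommRing R] [IsNoetherianRing R]
    (F : ℕ → Type*) [∀ n, AddCommGroup (F n)] [∀ n, Module R (F n)]
    [∀ n, Module.Flat R (F n)]
    (d : ∀ n : ℕ, F (n + 1) →ₗ[R] F n)
    (hcomplex : ∀ n : ℕ, (d n).comp (d (n + 1)) = 0)
    (hacyclic : ∀ (p : Ideal R) [p.IsPrime], ∀ n : ℕ,
      Function.Exact (LinearMap.lTensor (kappa p) (d (n + 1)))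
        (LinearMap.lTensor (kappa p) (d n))) :
    ∀ (M : Type*) [AddCommGroup M] [Module R M], ∀ n : ℕ,
      Function.Exact (LinearMap.lTensor M (d (n + 1))) (LinearMap.lTensor M (d n)) := by
  intro M _ _
  refine TensorAcyclic.of_forall_finite hcomplex fun N _ => ?_
  exact TensorAcyclic.of_annihilator_le hcomplex fun q _ _ =>
    tensorAcyclic_quotient_of_residueField hcomplex (fun p _ => hacyclic p) q
end

section
/- Let R be a noetherian commutative ring and F : ⋯ → F_{n+1} → F_n → F_{n-1} → ⋯ a (possibly unbounded) ℤ-indexed chain complex of flat R-modules. If κ(p) ⊗_R F is exact for every prime ideal p of R, then F is exact. -/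
open TensorProduct

/-!
Noetherian induction shows that `(R ⧸ I) ⊗ F` is exact for every ideal `I`; `I = 0` is the
theorem. If `I` is not prime, pick `a b ∉ I` with `a * b ∈ I`: by flatness of `F`, the short
exact sequence `0 → R ⧸ (I : a) → R ⧸ I → R ⧸ (I + (a)) → 0` gives a short exact sequence of
complexes whose outer terms are exact by induction. If `I = p` is prime, `κ(p) ⊗ F` is the
localization of `(R ⧸ p) ⊗ F` at `p`, so for every cycle `z` some `s ∉ p` makes `s • z` a
boundary. As `s` is a nonzerodivisor on `R ⧸ p`, the sequence
`0 → R ⧸ p → R ⧸ p → R ⧸ (p + (s)) → 0` (multiplication by `s`, then the projection) and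
exactness of `(R ⧸ (p + (s))) ⊗ F` make `s` injective on homology, so `z` is a boundary.
-/

open LinearMap

section

variable {R : Type*} [CommRing R]
  {M M' N P : Type*} [AddCommGroup M] [Module R M] [AddCommGroup M'] [Module R M']
  [AddCommGroup N] [Module R N] [AddCommGroup P] [Module R P]

lemma lTensor_rTensor_comm (g : N →ₗ[R] P) (h : M →ₗ[R] M') (x : M ⊗[R] N) :
    g.lTensor M' (h.rTensor N x) = h.rTensor P (g.lTensor M x) := by
  rw [← comp_apply, lTensor_comp_rTensor, ← rTensor_comp_lTensor, comp_apply]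

lemma exists_smul_mem_range_rTensor {S : Submonoid R} {ψ : M →ₗ[R] M'}
    (hψ : ∀ y, ∃ s ∈ S, s • y ∈ range ψ) (y : M' ⊗[R] N) :
    ∃ s ∈ S, s • y ∈ range (ψ.rTensor N) := by
  induction y with
  | zero => exact ⟨1, S.one_mem, by simp⟩
  | tmul y n =>
    obtain ⟨s, hs, x, hx⟩ := hψ y
    exact ⟨s, hs, x ⊗ₜ n, by rw [rTensor_tmul, hx, smul_tmul']⟩
  | add y y' ih ih' =>
    obtain ⟨s, hs, x, hx⟩ := ih
    obtain ⟨s', hs', x', hx'⟩ := ih'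
    refine ⟨s' * s, S.mul_mem hs' hs, s' • x + s • x', ?_⟩
    rw [map_add, map_smul, map_smul, hx, hx', smul_add, smul_smul, smul_smul, mul_comm s s']

end

section ThreeTerm

variable {R : Type*} [CommRing R]
  {A B C : Type*} [AddCommGroup A] [Module R A] [AddCommGroup B] [Module R B]
  [AddCommGroup C] [Module R C] {f : A →ₗ[R] B} {g : B →ₗ[R] C}

lemma lTensor_lTensor_eq_zero_s4 (hfg : g ∘ₗ f = 0) {M : Type*} [AddCommGroup M] [Module R M]
    (x : M ⊗[R] A) : g.lTensor M (f.lTensor M x) = 0 := by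
  rw [← LinearMap.comp_apply, ← lTensor_comp, hfg, lTensor_zero, LinearMap.zero_apply]

theorem exact_lTensor_of_shortExact [Module.Flat R C] (hfg : g ∘ₗ f = 0)
    {M' M M'' : Type*} [AddCommGroup M'] [Module R M'] [AddCommGroup M] [Module R M]
    [AddCommGroup M''] [Module R M''] {i : M' →ₗ[R] M} {π : M →ₗ[R] M''}
    (hi : Function.Injective i) (hiπ : Function.Exact i π) (hπ : Function.Surjective π)
    (h' : Function.Exact (f.lTensor M') (g.lTensor M'))
    (h'' : Function.Exact (f.lTensor M'') (g.lTensor M'')) :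
    Function.Exact (f.lTensor M) (g.lTensor M) := by
  refine exact_of_comp_of_mem_range (LinearMap.ext (lTensor_lTensor_eq_zero_s4 hfg)) fun x hx => ?_
  obtain ⟨c, hc⟩ := (h'' _).mp (show g.lTensor M'' (π.rTensor B x) = 0 by
    rw [lTensor_rTensor_comm, hx, map_zero])
  obtain ⟨b, rfl⟩ := rTensor_surjective A hπ c
  obtain ⟨a', ha'⟩ := (rTensor_exact B hiπ hπ _).mp (show π.rTensor B (x - f.lTensor M b) = 0 by
    rw [map_sub, ← lTensor_rTensor_comm, hc, sub_self])
  have hcycle : g.lTensor M' a' = 0 := by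
    apply Module.Flat.rTensor_preserves_injective_linearMap i hi
    rw [← lTensor_rTensor_comm, ha', map_sub, hx, lTensor_lTensor_eq_zero_s4 hfg, sub_zero, map_zero]
  obtain ⟨a, rfl⟩ := (h' a').mp hcycle
  exact ⟨b + i.rTensor A a, by rw [map_add, lTensor_rTensor_comm, ha', add_sub_cancel]⟩

theorem mem_range_lTensor_of_smul_mem_range [Module.Flat R C] (hfg : g ∘ₗ f = 0)
    {M N : Type*} [AddCommGroup M] [Module R M] [AddCommGroup N] [Module R N]
    {s : R} {π : M →ₗ[R] N} (hs : Function.Injective (DistribSMul.toLinearMap R M s))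
    (hsπ : Function.Exact (DistribSMul.toLinearMap R M s) π) (hπ : Function.Surjective π)
    (hN : Function.Exact (f.lTensor N) (g.lTensor N)) {x : M ⊗[R] C}
    (hx : s • x ∈ range (g.lTensor M)) : x ∈ range (g.lTensor M) := by
  obtain ⟨z, hz⟩ := hx
  have hcycle : g.lTensor N (π.rTensor B z) = 0 := by
    rw [lTensor_rTensor_comm, hz, ← DistribSMul.toLinearMap_apply (R := R), ← rTensor_smul_action,
      ← LinearMap.comp_apply, ← rTensor_comp, hsπ.linearMap_comp_eq_zero, rTensor_zero,
      LinearMap.zero_apply]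
  obtain ⟨c, hc⟩ := (hN _).mp hcycle
  obtain ⟨b, rfl⟩ := rTensor_surjective A hπ c
  obtain ⟨w, hw⟩ := (rTensor_exact B hsπ hπ _).mp (show π.rTensor B (z - f.lTensor M b) = 0 by
    rw [map_sub, ← lTensor_rTensor_comm, hc, sub_self])
  refine ⟨w, Module.Flat.rTensor_preserves_injective_linearMap _ hs ?_⟩
  simp only [rTensor_smul_action, DistribSMul.toLinearMap_apply] at hw ⊢
  rw [← map_smul, hw, map_sub, hz, lTensor_lTensor_eq_zero_s4 hfg, sub_zero]

end ThreeTerm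

section Quotient

variable {R : Type*} [CommRing R]

lemma exists_smul_mem_range_residueField (p : Ideal R) [p.IsPrime] (y : kappa p) :
    ∃ s ∈ p.primeCompl, s • y ∈ range (IsScalarTower.toAlgHom R (R ⧸ p) (kappa p)).toLinearMap := by
  obtain ⟨⟨a, b, hb⟩, hab⟩ := IsLocalization.surj (nonZeroDivisors (R ⧸ p)) y
  obtain ⟨s, rfl⟩ := Ideal.Quotient.mk_surjective b
  refine ⟨s, fun hs => nonZeroDivisors.ne_zero hb (Ideal.Quotient.eq_zero_iff_mem.mpr hs), a, ?_⟩
  rw [AlgHom.toLinearMap_apply, IsScalarTower.coe_toAlgHom', ← hab, Algebra.smul_def, mul_comm]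
  rfl

theorem exists_smul_mem_range_lTensor_quotient_of_exact_residueField
    {A B C : Type*} [AddCommGroup A] [Module R A] [AddCommGroup B] [Module R B]
    [AddCommGroup C] [Module R C] [Module.Flat R B] {f : A →ₗ[R] B} {g : B →ₗ[R] C}
    (p : Ideal R) [p.IsPrime] (hκ : Function.Exact (f.lTensor (kappa p)) (g.lTensor (kappa p)))
    {x : (R ⧸ p) ⊗[R] B} (hx : g.lTensor (R ⧸ p) x = 0) :
    ∃ s ∉ p, s • x ∈ range (f.lTensor (R ⧸ p)) := by
  set ψ := (IsScalarTower.toAlgHom R (R ⧸ p) (kappa p)).toLinearMap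
  obtain ⟨y, hy⟩ := (hκ _).mp (show g.lTensor (kappa p) (ψ.rTensor B x) = 0 by
    rw [lTensor_rTensor_comm, hx, map_zero])
  obtain ⟨s, hs, z, hz⟩ := exists_smul_mem_range_rTensor (exists_smul_mem_range_residueField p) y
  refine ⟨s, hs, z, Module.Flat.rTensor_preserves_injective_linearMap ψ
    p.injective_algebraMap_quotient_residueField ?_⟩
  rw [← lTensor_rTensor_comm, hz, map_smul, hy, map_smul]

lemma injective_smul_quotient_of_notMem (p : Ideal R) [p.IsPrime] {s : R} (hs : s ∉ p) :
    Function.Injective (DistribSMul.toLinearMap R (R ⧸ p) s) := by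
  intro x y hxy
  simp only [DistribSMul.toLinearMap_apply, Algebra.smul_def] at hxy
  exact mul_left_cancel₀ (by simpa [Ideal.Quotient.eq_zero_iff_mem] using hs) hxy

lemma exact_smul_factor_sup_span (I : Ideal R) (a : R) :
    Function.Exact (DistribSMul.toLinearMap R (R ⧸ I) a)
      (Submodule.factor (le_sup_left : I ≤ I ⊔ Ideal.span {a})) := by
  intro x
  obtain ⟨r, rfl⟩ := Submodule.mkQ_surjective I x
  rw [Submodule.factor_mk, Submodule.mkQ_apply, Submodule.Quotient.mk_eq_zero, Submodule.mem_sup]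
  simp only [Ideal.mem_span_singleton', Set.mem_range, DistribSMul.toLinearMap_apply,
    Submodule.mkQ_apply]
  constructor
  · rintro ⟨i, hi, _, ⟨t, rfl⟩, rfl⟩
    refine ⟨Submodule.Quotient.mk t, ?_⟩
    rw [← Submodule.Quotient.mk_smul, Submodule.Quotient.eq]
    convert I.neg_mem hi using 1
    rw [smul_eq_mul]
    ring
  · rintro ⟨y, hy⟩
    obtain ⟨t, rfl⟩ := Submodule.mkQ_surjective I y
    rw [Submodule.mkQ_apply, ← Submodule.Quotient.mk_smul, Submodule.Quotient.eq] at hy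
    refine ⟨r - a • t, by rw [← neg_sub]; exact I.neg_mem hy, t * a, ⟨t, rfl⟩, ?_⟩
    rw [smul_eq_mul]
    ring

noncomputable def mulColon (I : Ideal R) (a : R) : (R ⧸ I.colon {a}) →ₗ[R] R ⧸ I :=
  Submodule.mapQ _ I (LinearMap.mulRight R a) fun r hr => by
    simpa using Submodule.mem_colon_singleton.mp hr

lemma injective_mulColon (I : Ideal R) (a : R) : Function.Injective (mulColon I a) := by
  rw [← ker_eq_bot, mulColon, Submodule.mapQ, Submodule.ker_liftQ_eq_bot]
  intro r hr
  rw [mem_ker, LinearMap.comp_apply, Submodule.mkQ_apply, Submodule.Quotient.mk_eq_zero] at hr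
  exact Submodule.mem_colon_singleton.mpr hr

lemma exact_mulColon_factor_sup_span (I : Ideal R) (a : R) :
    Function.Exact (mulColon I a) (Submodule.factor (le_sup_left : I ≤ I ⊔ Ideal.span {a})) := by
  have hcolon : I ≤ I.colon {a} := fun r hr => by simpa using I.mul_mem_right a hr
  have hsmul : mulColon I a ∘ₗ Submodule.factor hcolon = DistribSMul.toLinearMap R (R ⧸ I) a := by
    ext
    change Submodule.Quotient.mk (1 * a) = Submodule.Quotient.mk (a • 1)
    rw [one_mul, smul_eq_mul, mul_one]
  rw [← (Submodule.factor_surjective hcolon).comp_exact_iff_exact, hsmul]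
  exact exact_smul_factor_sup_span I a

end Quotient

section Complex

variable {R : Type*} [CommRing R] {F : ℤ → Type*} [∀ n, AddCommGroup (F n)] [∀ n, Module R (F n)]
  (d : ∀ n : ℤ, F (n + 1) →ₗ[R] F n)

def IsExactAfterTensor (M : Type*) [AddCommGroup M] [Module R M] : Prop :=
  ∀ n : ℤ, Function.Exact ((d (n + 1)).lTensor M) ((d n).lTensor M)

variable {d}

lemma isExactAfterTensor_of_subsingleton (M : Type*) [AddCommGroup M] [Module R M]
    [Subsingleton M] : IsExactAfterTensor d M := fun _ _ =>
  ⟨fun _ => ⟨0, Subsingleton.elim _ _⟩, fun _ => Subsingleton.elim _ _⟩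

variable [∀ n, Module.Flat R (F n)] (hd : ∀ n : ℤ, d n ∘ₗ d (n + 1) = 0)
include hd

lemma isExactAfterTensor_quotient_of_isPrime (p : Ideal R) [p.IsPrime]
    (hκ : IsExactAfterTensor d (kappa p)) (hgt : ∀ J, p < J → IsExactAfterTensor d (R ⧸ J)) :
    IsExactAfterTensor d (R ⧸ p) := by
  intro n
  refine exact_of_comp_of_mem_range (LinearMap.ext (lTensor_lTensor_eq_zero_s4 (hd n))) fun x hx => ?_
  obtain ⟨s, hs, hsx⟩ := exists_smul_mem_range_lTensor_quotient_of_exact_residueField p (hκ n) hx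
  have hlt : p < p ⊔ Ideal.span {s} := left_lt_sup.mpr (by rwa [Ideal.span_singleton_le_iff_mem])
  exact mem_range_lTensor_of_smul_mem_range (hd (n + 1)) (injective_smul_quotient_of_notMem p hs)
    (exact_smul_factor_sup_span p s) (Submodule.factor_surjective _) (hgt _ hlt (n + 1)) hsx

lemma isExactAfterTensor_quotient_of_colon_of_sup (I : Ideal R) (a : R)
    (hcolon : IsExactAfterTensor d (R ⧸ I.colon {a}))
    (hsup : IsExactAfterTensor d (R ⧸ (I ⊔ Ideal.span {a}))) :
    IsExactAfterTensor d (R ⧸ I) := fun n =>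
  exact_lTensor_of_shortExact (hd n) (injective_mulColon I a) (exact_mulColon_factor_sup_span I a)
    (Submodule.factor_surjective _) (hcolon n) (hsup n)

theorem isExactAfterTensor_quotient [IsNoetherianRing R]
    (hκ : ∀ (p : Ideal R) [p.IsPrime], IsExactAfterTensor d (kappa p)) (I : Ideal R) :
    IsExactAfterTensor d (R ⧸ I) := by
  induction I using IsNoetherian.induction with | _ I ih =>
  by_cases htop : I = ⊤
  · have : Subsingleton (R ⧸ I) := Ideal.Quotient.subsingleton_iff.mpr htop
    exact isExactAfterTensor_of_subsingleton _
  by_cases hI : Ideal.IsPrime I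
  · exact isExactAfterTensor_quotient_of_isPrime hd I (hκ I) ih
  obtain ⟨a, b, hab, ha, hb⟩ : ∃ a b, a * b ∈ I ∧ a ∉ I ∧ b ∉ I := by
    simpa [Ideal.isPrime_iff, htop] using hI
  refine isExactAfterTensor_quotient_of_colon_of_sup hd I a (ih _ ?_) (ih _ ?_)
  · exact lt_of_le_of_ne (fun r hr => by simpa using Ideal.mul_mem_right a I hr)
      fun h => hb (h ▸ Submodule.mem_colon_singleton.mpr (by simpa [mul_comm] using hab))
  · exact left_lt_sup.mpr (by rwa [Ideal.span_singleton_le_iff_mem])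

end Complex

section Bot

variable {R : Type*} [CommRing R] {A B C : Type*} [AddCommGroup A] [Module R A]
  [AddCommGroup B] [Module R B] [AddCommGroup C] [Module R C]

noncomputable def quotientBotTensorEquiv (M : Type*) [AddCommGroup M] [Module R M] :
    (R ⧸ (⊥ : Ideal R)) ⊗[R] M ≃ₗ[R] M :=
  (TensorProduct.congr (Submodule.quotEquivOfEqBot ⊥ rfl) (LinearEquiv.refl R M)).trans
    (TensorProduct.lid R M)

lemma quotientBotTensorEquiv_comp_lTensor (f : A →ₗ[R] B) :
    (quotientBotTensorEquiv B).toLinearMap ∘ₗ f.lTensor (R ⧸ (⊥ : Ideal R)) =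
      f ∘ₗ (quotientBotTensorEquiv A).toLinearMap := by
  ext
  simp [quotientBotTensorEquiv]

lemma exact_of_exact_lTensor_quotient_bot {f : A →ₗ[R] B} {g : B →ₗ[R] C}
    (h : Function.Exact (f.lTensor (R ⧸ (⊥ : Ideal R))) (g.lTensor (R ⧸ (⊥ : Ideal R)))) :
    Function.Exact f g :=
  Function.Exact.of_ladder_linearEquiv_of_exact (quotientBotTensorEquiv_comp_lTensor f).symm
    (quotientBotTensorEquiv_comp_lTensor g).symm h

end Bot

/-- Let `R` be a noetherian commutative ring and `F` a (possibly
unbounded) `ℤ`-indexed chain complex of flat `R`-modules, with differentials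
`d n : F (n+1) → F n`.  If `κ(p) ⊗[R] F` is exact for every prime ideal `p` of `R`,
then `F` is exact. -/
theorem stmt_4 (R : Type*) [CommRing R] [IsNoetherianRing R]
    (F : ℤ → Type*) [∀ n, AddCommGroup (F n)] [∀ n, Module R (F n)]
    [∀ n, Module.Flat R (F n)]
    (d : ∀ n : ℤ, F (n + 1) →ₗ[R] F n)
    (hcomplex : ∀ n : ℤ, (d n).comp (d (n + 1)) = 0)
    (hexact : ∀ (p : Ideal R) [p.IsPrime], ∀ n : ℤ,
      Function.Exact (LinearMap.lTensor (kappa p) (d (n + 1)))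
        (LinearMap.lTensor (kappa p) (d n))) :
    ∀ n : ℤ, Function.Exact (d (n + 1)) (d n) := fun n =>
  exact_of_exact_lTensor_quotient_bot
    (isExactAfterTensor_quotient hcomplex (fun p _ => hexact p) ⊥ n)
end

section
/- Let R be a noetherian commutative ring and F : ⋯ → F_{n+1} → F_n → F_{n-1} → ⋯ a (possibly unbounded) ℤ-indexed chain complex of flat R-modules with differentials d_n : F_n → F_{n-1}. If κ(p) ⊗_R F is exact for every prime ideal p of R, then M ⊗_R F is exact for every R-module M, and the image of d_n is a flat R-module for every n. -/
/-!
Call a coefficient module `M` good (`TensorExact d M`) if `M ⊗ F` is exact. Since the `F n` are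
flat, good modules are closed under extensions, and a module is good as soon as its finitely
generated submodules are; by prime filtrations it therefore suffices to show that `R ⧸ p` is good
for every prime `p`, by noetherian induction on `p`. A cycle `x` of `(R ⧸ p) ⊗ F` becomes a
boundary in `κ(p) ⊗ F`, so `s • x = d y` for some `s ∉ p`. Then `y` is a cycle modulo `s`, and
`(R ⧸ p) ⧸ s` is filtered by quotients `R ⧸ q` with `q ⊋ p`, so `y - d z = s • w`; as `s` is
regular on `(R ⧸ p) ⊗ F`, `x = d w`. Finally `im d n ≅ F (n + 1) ⧸ im d (n + 1)` is flat because
`(R ⧸ I) ⊗ F` is exact at `n + 1`, i.e. `(R ⧸ I) ⊗ im d (n + 1) → (R ⧸ I) ⊗ F (n + 1)` is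
injective.
-/

open TensorProduct

open LinearMap

section Generalities

variable {R : Type*} [CommRing R]

theorem rTensor_lTensor_comm {M M' X Y : Type*} [AddCommGroup M] [Module R M]
    [AddCommGroup M'] [Module R M'] [AddCommGroup X] [Module R X] [AddCommGroup Y] [Module R Y]
    (f : M →ₗ[R] M') (g : X →ₗ[R] Y) (v : M ⊗[R] X) :
    rTensor Y f (lTensor M g v) = lTensor M' g (rTensor X f v) := by
  rw [← comp_apply, ← comp_apply, rTensor_comp_lTensor, lTensor_comp_rTensor]

theorem exists_smul_mem_range_rTensor_s5 {M N : Type*} [AddCommGroup M] [Module R M]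
    [AddCommGroup N] [Module R N] {S : Submonoid R} {ι : M →ₗ[R] N}
    (h : ∀ y, ∃ s ∈ S, s • y ∈ range ι) (X : Type*) [AddCommGroup X] [Module R X]
    (z : N ⊗[R] X) : ∃ s ∈ S, s • z ∈ range (rTensor X ι) := by
  induction z using TensorProduct.induction_on with
  | zero => exact ⟨1, S.one_mem, 0, by simp⟩
  | tmul y x =>
    obtain ⟨s, hs, m, hm⟩ := h y
    exact ⟨s, hs, m ⊗ₜ x, by rw [rTensor_tmul, hm, smul_tmul']⟩
  | add z₁ z₂ h₁ h₂ =>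
    obtain ⟨s₁, hs₁, w₁, hw₁⟩ := h₁
    obtain ⟨s₂, hs₂, w₂, hw₂⟩ := h₂
    refine ⟨s₁ * s₂, S.mul_mem hs₁ hs₂, s₂ • w₁ + s₁ • w₂, ?_⟩
    rw [map_add, map_smul, map_smul, hw₁, hw₂, smul_add, smul_smul, smul_smul, mul_comm s₂ s₁]

theorem lTensor_range_subtype_injective {A B C M : Type*} [AddCommGroup A] [Module R A]
    [AddCommGroup B] [Module R B] [AddCommGroup C] [Module R C] [AddCommGroup M] [Module R M]
    {f : A →ₗ[R] B} {g : B →ₗ[R] C} (hgf : g ∘ₗ f = 0)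
    (hexact : Function.Exact (lTensor M f) (lTensor M g)) :
    Function.Injective (lTensor M (range g).subtype) := by
  rw [injective_iff_map_eq_zero]
  intro x hx
  obtain ⟨y, rfl⟩ := lTensor_surjective M g.surjective_rangeRestrict x
  rw [← lTensor_comp_apply, subtype_comp_codRestrict] at hx
  obtain ⟨z, rfl⟩ := (hexact y).mp hx
  have : g.rangeRestrict ∘ₗ f = 0 := by ext a; simpa using congr($hgf a)
  rw [← lTensor_comp_apply, this, lTensor_zero, LinearMap.zero_apply]

theorem Module.Flat.of_exact_of_lTensor_quotient_injective {K P C : Type*}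
    [AddCommGroup K] [Module R K] [AddCommGroup P] [Module R P] [AddCommGroup C] [Module R C]
    [Module.Flat R P] {κ : K →ₗ[R] P} {π : P →ₗ[R] C} (hexact : Function.Exact κ π)
    (hπ : Function.Surjective π) (hκ : ∀ I : Ideal R, Function.Injective (lTensor (R ⧸ I) κ)) :
    Module.Flat R C := by
  rw [Module.Flat.iff_rTensor_injective']
  intro I
  rw [injective_iff_map_eq_zero]
  intro u hu
  obtain ⟨v, rfl⟩ := lTensor_surjective I hπ u
  obtain ⟨k, hk⟩ : rTensor P I.subtype v ∈ range (lTensor R κ) := by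
    refine (_root_.lTensor_exact R hexact hπ _).mp ?_
    rwa [← rTensor_lTensor_comm]
  obtain ⟨k', rfl⟩ : k ∈ range (rTensor K I.subtype) := by
    refine (_root_.rTensor_exact K (LinearMap.exact_subtype_mkQ I) I.mkQ_surjective k).mp (hκ I ?_)
    rw [map_zero, ← rTensor_lTensor_comm, hk, ← rTensor_comp_apply,
      (LinearMap.exact_subtype_mkQ I).linearMap_comp_eq_zero, rTensor_zero, LinearMap.zero_apply]
  have hv : v = lTensor I κ k' := by
    refine Module.Flat.rTensor_preserves_injective_linearMap _ I.injective_subtype ?_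
    rw [← hk, rTensor_lTensor_comm]
  rw [hv, ← lTensor_comp_apply, hexact.linearMap_comp_eq_zero, lTensor_zero, LinearMap.zero_apply]

end Generalities

theorem kappa_exists_smul_mem_range {R : Type*} [CommRing R] (p : Ideal R) [p.IsPrime]
    (k : kappa p) : ∃ s ∈ p.primeCompl,
      s • k ∈ range (IsScalarTower.toAlgHom R (R ⧸ p) (kappa p)).toLinearMap := by
  obtain ⟨⟨a, b⟩, rfl⟩ := IsLocalization.mk'_surjective (nonZeroDivisors (R ⧸ p)) k
  obtain ⟨s, hs⟩ := Ideal.Quotient.mk_surjective (b : R ⧸ p)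
  refine ⟨s, fun hsp => nonZeroDivisors.coe_ne_zero b ?_, a, ?_⟩
  · rwa [← hs, Ideal.Quotient.eq_zero_iff_mem]
  · rw [AlgHom.toLinearMap_apply, IsScalarTower.coe_toAlgHom', Algebra.smul_def,
      IsScalarTower.algebraMap_apply R (R ⧸ p) (kappa p), Ideal.Quotient.algebraMap_eq, hs,
      IsLocalization.mk'_spec']

section Complex

variable {R : Type*} [CommRing R] {F : ℤ → Type*} [∀ n, AddCommGroup (F n)] [∀ n, Module R (F n)]

variable (d : ∀ n : ℤ, F (n + 1) →ₗ[R] F n) in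
def TensorExact (M : Type*) [AddCommGroup M] [Module R M] : Prop :=
  ∀ n : ℤ, Function.Exact (lTensor M (d (n + 1))) (lTensor M (d n))

variable {d : ∀ n : ℤ, F (n + 1) →ₗ[R] F n} {M : Type*} [AddCommGroup M] [Module R M]

theorem TensorExact.exact (hR : TensorExact d R) (n : ℤ) : Function.Exact (d (n + 1)) (d n) :=
  Function.Exact.of_ladder_linearEquiv_of_exact (e₁ := TensorProduct.lid R _)
    (e₂ := TensorProduct.lid R _) (e₃ := TensorProduct.lid R _) (by ext; simp) (by ext; simp)
    (hR n)

theorem TensorExact.exists_smul_mem_range [∀ n, Module.Flat R (F n)] {N : Type*}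
    [AddCommGroup N] [Module R N] {S : Submonoid R} {ι : M →ₗ[R] N} (hι : Function.Injective ι)
    (hden : ∀ y, ∃ s ∈ S, s • y ∈ range ι) (hN : TensorExact d N) {n : ℤ}
    {x : M ⊗[R] F (n + 1)} (hx : lTensor M (d n) x = 0) :
    ∃ s ∈ S, s • x ∈ range (lTensor M (d (n + 1))) := by
  obtain ⟨z, hz⟩ := (hN n _).mp (by rw [← rTensor_lTensor_comm, hx, map_zero] :
    lTensor N (d n) (rTensor (F (n + 1)) ι x) = 0)
  obtain ⟨s, hs, y, hy⟩ := exists_smul_mem_range_rTensor_s5 hden _ z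
  refine ⟨s, hs, y, Module.Flat.rTensor_preserves_injective_linearMap ι hι ?_⟩
  rw [rTensor_lTensor_comm, hy, map_smul, map_smul, hz]

variable (hd : ∀ n : ℤ, (d n).comp (d (n + 1)) = 0)
include hd

theorem lTensor_d_comp_d (n : ℤ) (y : M ⊗[R] F (n + 1 + 1)) :
    lTensor M (d n) (lTensor M (d (n + 1)) y) = 0 := by
  rw [← lTensor_comp_apply, hd, lTensor_zero, LinearMap.zero_apply]

theorem TensorExact.of_mem_range
    (h : ∀ n (x : M ⊗[R] F (n + 1)), lTensor M (d n) x = 0 → x ∈ range (lTensor M (d (n + 1)))) :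
    TensorExact d M := by
  refine fun n x => ⟨h n x, ?_⟩
  rintro ⟨y, rfl⟩
  exact lTensor_d_comp_d hd n y

theorem TensorExact.of_subsingleton [Subsingleton M] : TensorExact d M :=
  TensorExact.of_mem_range hd fun _ _ _ => ⟨0, Subsingleton.elim _ _⟩

variable [∀ n, Module.Flat R (F n)]

theorem TensorExact.of_exact {A C : Type*} [AddCommGroup A] [Module R A] [AddCommGroup C]
    [Module R C] {f : A →ₗ[R] M} {g : M →ₗ[R] C} (hf : Function.Injective f)
    (hg : Function.Surjective g) (hfg : Function.Exact f g)
    (hA : TensorExact d A) (hC : TensorExact d C) : TensorExact d M := by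
  refine TensorExact.of_mem_range hd fun n x hx => ?_
  obtain ⟨c, hc⟩ := (hC n _).mp (by rw [← rTensor_lTensor_comm, hx, map_zero] :
    lTensor C (d n) (rTensor (F (n + 1)) g x) = 0)
  obtain ⟨b, rfl⟩ := rTensor_surjective (F (n + 1 + 1)) hg c
  obtain ⟨a, ha⟩ := (rTensor_exact (F (n + 1)) hfg hg (x - lTensor M (d (n + 1)) b)).mp
    (by rw [map_sub, rTensor_lTensor_comm, hc, sub_self])
  have hda : lTensor A (d n) a = 0 := by
    refine Module.Flat.rTensor_preserves_injective_linearMap f hf ?_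
    rw [rTensor_lTensor_comm, ha, map_sub, hx, lTensor_d_comp_d hd, sub_self, map_zero]
  obtain ⟨a', ha'⟩ := (hA n _).mp hda
  refine ⟨b + rTensor _ f a', ?_⟩
  rw [map_add, ← rTensor_lTensor_comm, ha', ha, add_sub_cancel]

theorem TensorExact.of_linearEquiv {N : Type*} [AddCommGroup N] [Module R N] (e : N ≃ₗ[R] M)
    (hN : TensorExact d N) : TensorExact d M :=
  TensorExact.of_exact hd e.injective (Function.surjective_to_subsingleton (0 : M →ₗ[R] PUnit))
    ((e.exact_zero_iff_surjective _).mpr e.surjective) hN (TensorExact.of_subsingleton hd)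

open scoped Pointwise in
theorem TensorExact.mem_range_of_smul_mem_range {s : R} (hs : IsSMulRegular M s)
    (hQ : TensorExact d (QuotSMulTop s M)) {n : ℤ} {x : M ⊗[R] F (n + 1)}
    (hsx : s • x ∈ range (lTensor M (d (n + 1)))) :
    x ∈ range (lTensor M (d (n + 1))) := by
  obtain ⟨y, hy⟩ := hsx
  have hexact := LinearMap.exact_lsmul_mkQ_smul_top M s
  have hsmul (k : ℤ) (v : M ⊗[R] F k) : rTensor (F k) (lsmul R M s) v = s • v := by
    rw [show lsmul R M s = DistribSMul.toLinearMap R M s from rfl, rTensor_smul_action]; rfl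
  obtain ⟨z, hz⟩ := (hQ (n + 1) _).mp (by
    rw [← rTensor_lTensor_comm, hy, ← hsmul, ← rTensor_comp_apply,
      hexact.linearMap_comp_eq_zero, rTensor_zero, LinearMap.zero_apply] :
    lTensor (QuotSMulTop s M) (d (n + 1)) (rTensor (F (n + 1 + 1)) (s • ⊤ : Submodule R M).mkQ y)
      = 0)
  obtain ⟨z, rfl⟩ := rTensor_surjective (F (n + 1 + 1 + 1)) (Submodule.mkQ_surjective _) z
  obtain ⟨w, hw⟩ := (rTensor_exact (F (n + 1 + 1)) hexact (Submodule.mkQ_surjective _)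
    (y - lTensor M (d (n + 1 + 1)) z)).mp (by rw [map_sub, rTensor_lTensor_comm, hz, sub_self])
  refine ⟨w, (hs.rTensor (F (n + 1))) ?_⟩
  change s • _ = s • _
  rw [← map_smul, ← hsmul, hw, map_sub, lTensor_d_comp_d hd, sub_zero, hy]

theorem TensorExact.of_injective_of_quotSMulTop {N : Type*} [AddCommGroup N] [Module R N]
    {S : Submonoid R} {ι : M →ₗ[R] N} (hι : Function.Injective ι)
    (hden : ∀ y, ∃ s ∈ S, s • y ∈ range ι) (hreg : ∀ s ∈ S, IsSMulRegular M s)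
    (hN : TensorExact d N) (hQ : ∀ s ∈ S, TensorExact d (QuotSMulTop s M)) :
    TensorExact d M := by
  refine TensorExact.of_mem_range hd fun n x hx => ?_
  obtain ⟨s, hs, hsx⟩ := hN.exists_smul_mem_range hι hden hx
  exact TensorExact.mem_range_of_smul_mem_range hd (hreg s hs) (hQ s hs) hsx

theorem TensorExact.of_le_annihilator [IsNoetherianRing R] {J : Ideal R}
    (h : ∀ q : Ideal R, q.IsPrime → J ≤ q → TensorExact d (R ⧸ q))
    (N : Type*) [AddCommGroup N] [Module R N] [Module.Finite R N]
    (hN : J ≤ Module.annihilator R N) : TensorExact d N := by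
  revert hN
  induction ‹Module.Finite R N› using
    IsNoetherianRing.induction_on_isQuotientEquivQuotientPrime R with
  | subsingleton N => exact fun _ => TensorExact.of_subsingleton hd
  | quotient N q e =>
    intro hN
    refine TensorExact.of_linearEquiv hd e.symm (h q.1 q.2 ?_)
    rwa [e.annihilator_eq, Ideal.annihilator_quotient] at hN
  | exact N₁ N₂ N₃ f g hf hg hfg h₁ h₃ =>
    intro hN
    exact TensorExact.of_exact hd hf hg hfg (h₁ (hN.trans (f.annihilator_le_of_injective hf)))
      (h₃ (hN.trans (g.annihilator_le_of_surjective hg)))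

theorem TensorExact.quotient_of_isPrime [IsNoetherianRing R]
    (hκ : ∀ (p : Ideal R) [p.IsPrime], TensorExact d (kappa p)) (p : Ideal R) (hp : p.IsPrime) :
    TensorExact d (R ⧸ p) := by
  induction p using WellFoundedGT.induction with
  | _ p IH =>
  refine TensorExact.of_injective_of_quotSMulTop hd (S := p.primeCompl)
    (ι := (IsScalarTower.toAlgHom R (R ⧸ p) (kappa p)).toLinearMap)
    (Ideal.injective_algebraMap_quotient_residueField p) (kappa_exists_smul_mem_range p)
    (fun s hs => (isSMulRegular_quotient_iff_mem_of_smul_mem p s).mpr fun _ hx =>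
      (hp.mem_or_mem hx).resolve_left hs) (hκ p) fun s hs => ?_
  have hs_mem : s ∈ p ⊔ Ideal.span {s} :=
    Submodule.mem_sup_right (Ideal.mem_span_singleton_self s)
  refine TensorExact.of_le_annihilator hd (J := p ⊔ Ideal.span {s})
    (fun q hq hpq => IH q (lt_of_le_of_ne (le_sup_left.trans hpq) ?_) hq) _ ?_
  · rintro rfl
    exact hs (hpq hs_mem)
  · refine sup_le ?_ ((Ideal.span_singleton_le_iff_mem _).mpr (QuotSMulTop.mem_annihilator _ s))
    calc p = Module.annihilator R (R ⧸ p) := (Ideal.annihilator_quotient).symm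
      _ ≤ _ := LinearMap.annihilator_le_of_surjective _ (Submodule.mkQ_surjective _)

theorem TensorExact.of_finite [IsNoetherianRing R]
    (hκ : ∀ (p : Ideal R) [p.IsPrime], TensorExact d (kappa p)) [Module.Finite R M] :
    TensorExact d M :=
  TensorExact.of_le_annihilator hd (J := ⊥)
    (fun q hq _ => TensorExact.quotient_of_isPrime hd hκ q hq) M bot_le

theorem TensorExact.of_forall_fg (h : ∀ N : Submodule R M, N.FG → TensorExact d N) :
    TensorExact d M := by
  refine TensorExact.of_mem_range hd fun n x hx => ?_
  obtain ⟨N, hN, x, rfl⟩ := Submodule.exists_fg_le_eq_rTensor_subtype x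
  have hx' : lTensor N (d n) x = 0 := by
    refine Module.Flat.rTensor_preserves_injective_linearMap _ N.injective_subtype ?_
    rw [rTensor_lTensor_comm, hx, map_zero]
  obtain ⟨y, rfl⟩ := (h N hN n x).mp hx'
  exact ⟨rTensor _ N.subtype y, (rTensor_lTensor_comm N.subtype (d (n + 1)) y).symm⟩

theorem TensorExact.of_forall_kappa [IsNoetherianRing R]
    (hκ : ∀ (p : Ideal R) [p.IsPrime], TensorExact d (kappa p)) : TensorExact d M :=
  TensorExact.of_forall_fg hd fun N hN =>
    have : Module.Finite R N := Module.Finite.iff_fg.mpr hN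
    TensorExact.of_finite hd hκ

theorem TensorExact.flat_range (hR : TensorExact d R) (hI : ∀ I : Ideal R, TensorExact d (R ⧸ I))
    (n : ℤ) : Module.Flat R (range (d n)) :=
  Module.Flat.of_exact_of_lTensor_quotient_injective (hR.exact n).linearMap_rangeRestrict
    (d n).surjective_rangeRestrict fun I =>
      lTensor_range_subtype_injective (hd (n + 1)) (hI I (n + 1))

end Complex

/-- Let `R` be a noetherian commutative ring and `F` a (possibly
unbounded) `ℤ`-indexed chain complex of flat `R`-modules with differentials
`d n : F (n+1) → F n`.  If `κ(p) ⊗[R] F` is exact for every prime ideal `p`, then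
`M ⊗[R] F` is exact for every `R`-module `M`, and the image of each differential is a
flat `R`-module. -/
theorem stmt_5 (R : Type*) [CommRing R] [IsNoetherianRing R]
    (F : ℤ → Type*) [∀ n, AddCommGroup (F n)] [∀ n, Module R (F n)]
    [∀ n, Module.Flat R (F n)]
    (d : ∀ n : ℤ, F (n + 1) →ₗ[R] F n)
    (hcomplex : ∀ n : ℤ, (d n).comp (d (n + 1)) = 0)
    (hexact : ∀ (p : Ideal R) [p.IsPrime], ∀ n : ℤ,
      Function.Exact (LinearMap.lTensor (kappa p) (d (n + 1)))
        (LinearMap.lTensor (kappa p) (d n))) :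
    (∀ (M : Type*) [AddCommGroup M] [Module R M], ∀ n : ℤ,
      Function.Exact (LinearMap.lTensor M (d (n + 1))) (LinearMap.lTensor M (d n))) ∧
      ∀ n : ℤ, Module.Flat R (LinearMap.range (d n)) := by
  have hκ : ∀ (p : Ideal R) [p.IsPrime], TensorExact d (kappa p) := fun p _ => hexact p
  exact ⟨fun M _ _ => TensorExact.of_forall_kappa hcomplex hκ,
    TensorExact.flat_range hcomplex (TensorExact.of_forall_kappa hcomplex hκ)
      fun _ => TensorExact.of_forall_kappa hcomplex hκ⟩
end

section
/- Let R be a noetherian commutative ring and φ : F₁ → F₀ an R-linear map between flat R-modules. If for every prime ideal p of R the induced map κ(p) ⊗_R φ : κ(p) ⊗_R F₁ → κ(p) ⊗_R F₀ is injective, then φ is injective and Coker φ = F₀/φ(F₁) is a flat R-module. -/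
/-!
Call a module `M` good if `M ⊗ φ` is injective. As `F₁` and `F₀` are flat, goodness passes to
submodules and is preserved by extensions (four lemma). Since `R ⧸ p` embeds into `κ(p)`, every
`R ⧸ p` is good, hence so is every finitely generated module, by a prime filtration. Goodness of
`R` is injectivity of `φ`; goodness of every `R ⧸ I` makes `I ⊗ Coker φ → Coker φ` injective,
since over the flat `F₀` the kernel of `R ⧸ I ⊗ φ` computes `Tor₁(R ⧸ I, Coker φ)`.
-/

open TensorProduct

namespace LinearMap

variable {R : Type*} [CommRing R] {F₁ F₀ : Type*} [AddCommGroup F₁] [Module R F₁]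
  [AddCommGroup F₀] [Module R F₀] (φ : F₁ →ₗ[R] F₀)

theorem rTensor_lTensor_comm_apply {M N P Q : Type*} [AddCommGroup M] [Module R M]
    [AddCommGroup N] [Module R N] [AddCommGroup P] [Module R P] [AddCommGroup Q] [Module R Q]
    (f : M →ₗ[R] P) (g : N →ₗ[R] Q) (x : M ⊗[R] N) :
    f.rTensor Q (g.lTensor M x) = g.lTensor P (f.rTensor N x) := by
  rw [← comp_apply, rTensor_comp_lTensor, ← lTensor_comp_rTensor, comp_apply]

theorem lTensor_injective_of_injective_linearMap [Module.Flat R F₁] {A A' : Type*}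
    [AddCommGroup A] [Module R A] [AddCommGroup A'] [Module R A'] {e : A →ₗ[R] A'}
    (he : Function.Injective e) (h : Function.Injective (φ.lTensor A')) :
    Function.Injective (φ.lTensor A) := by
  have hcomp : Function.Injective (φ.lTensor A' ∘ e.rTensor F₁) :=
    h.comp (Module.Flat.rTensor_preserves_injective_linearMap e he)
  rw [← coe_comp, lTensor_comp_rTensor, ← rTensor_comp_lTensor, coe_comp] at hcomp
  exact hcomp.of_comp

theorem lTensor_injective_of_exact [Module.Flat R F₁] [Module.Flat R F₀] {A B C : Type*}
    [AddCommGroup A] [Module R A] [AddCommGroup B] [Module R B] [AddCommGroup C] [Module R C]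
    {f : A →ₗ[R] B} {g : B →ₗ[R] C} (hf : Function.Injective f) (hfg : Function.Exact f g)
    (hg : Function.Surjective g) (hA : Function.Injective (φ.lTensor A))
    (hC : Function.Injective (φ.lTensor C)) : Function.Injective (φ.lTensor B) :=
  injective_of_surjective_of_injective_of_injective (0 : Unit →ₗ[R] A ⊗[R] F₁)
    (f.rTensor F₁) (g.rTensor F₁) (0 : Unit →ₗ[R] A ⊗[R] F₀) (f.rTensor F₀) (g.rTensor F₀)
    0 (φ.lTensor A) (φ.lTensor B) (φ.lTensor C) (by ext; simp) (by ext; simp) (by ext; simp)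
    ((exact_zero_iff_injective _ _).2 (Module.Flat.rTensor_preserves_injective_linearMap f hf))
    (rTensor_exact F₁ hfg hg)
    ((exact_zero_iff_injective _ _).2 (Module.Flat.rTensor_preserves_injective_linearMap f hf))
    (fun _ ↦ ⟨(), rfl⟩) hA hC

theorem lTensor_quotient_injective_of_lTensor_residueField_injective [Module.Flat R F₁]
    (p : Ideal R) [p.IsPrime] (h : Function.Injective (φ.lTensor p.ResidueField)) :
    Function.Injective (φ.lTensor (R ⧸ p)) :=
  φ.lTensor_injective_of_injective_linearMap
    (e := (IsScalarTower.toAlgHom R (R ⧸ p) p.ResidueField).toLinearMap)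
    p.injective_algebraMap_quotient_residueField h

theorem lTensor_injective_of_finite [IsNoetherianRing R] [Module.Flat R F₁] [Module.Flat R F₀]
    (h : ∀ (p : Ideal R) [p.IsPrime], Function.Injective (φ.lTensor p.ResidueField))
    (M : Type*) [AddCommGroup M] [Module R M] [Module.Finite R M] :
    Function.Injective (φ.lTensor M) := by
  induction ‹Module.Finite R M› using
    IsNoetherianRing.induction_on_isQuotientEquivQuotientPrime R with
  | subsingleton N => exact Function.injective_of_subsingleton _
  | quotient N p e =>
    exact φ.lTensor_injective_of_injective_linearMap e.injective
      (φ.lTensor_quotient_injective_of_lTensor_residueField_injective p.1 (h p.1))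
  | exact N₁ N₂ N₃ f g hf hg hfg h₁ h₃ => exact φ.lTensor_injective_of_exact hf hfg hg h₁ h₃

theorem injective_of_lTensor_self_injective (h : Function.Injective (φ.lTensor R)) :
    Function.Injective φ := by
  have hφ : ⇑φ = TensorProduct.lid R F₀ ∘ φ.lTensor R ∘ (TensorProduct.lid R F₁).symm := by
    ext x; simp
  rw [hφ]
  exact (TensorProduct.lid R F₀).injective.comp (h.comp (TensorProduct.lid R F₁).symm.injective)

theorem rTensor_injective_of_exact [Module.Flat R F₀] {C : Type*} [AddCommGroup C] [Module R C]
    {π : F₀ →ₗ[R] C} (hφπ : Function.Exact φ π) (hπ : Function.Surjective π)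
    {N N' N'' : Type*} [AddCommGroup N] [Module R N] [AddCommGroup N'] [Module R N']
    [AddCommGroup N''] [Module R N''] {f : N →ₗ[R] N'} {g : N' →ₗ[R] N''}
    (hf : Function.Injective f) (hfg : Function.Exact f g) (hg : Function.Surjective g)
    (h : Function.Injective (φ.lTensor N'')) : Function.Injective (f.rTensor C) := by
  have hfF₀ := Module.Flat.rTensor_preserves_injective_linearMap (M := F₀) f hf
  refine (injective_iff_map_eq_zero _).2 fun x hx ↦ ?_
  obtain ⟨y, rfl⟩ := lTensor_surjective N hπ x
  obtain ⟨z, hz⟩ : f.rTensor F₀ y ∈ range (φ.lTensor N') := by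
    refine (lTensor_exact N' hφπ hπ _).1 ?_
    rwa [← rTensor_lTensor_comm_apply]
  obtain ⟨w, rfl⟩ : z ∈ range (f.rTensor F₁) := by
    refine (rTensor_exact F₁ hfg hg _).1 (h ?_)
    rw [map_zero, ← rTensor_lTensor_comm_apply, hz]
    exact (rTensor_exact F₀ hfg hg).apply_apply_eq_zero y
  obtain rfl : φ.lTensor N w = y := hfF₀ (by rwa [rTensor_lTensor_comm_apply])
  rw [← comp_apply, ← lTensor_comp, hφπ.linearMap_comp_eq_zero, lTensor_zero, zero_apply]

theorem flat_quotient_range_of_lTensor_quotient_injective [Module.Flat R F₀]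
    (h : ∀ I : Ideal R, Function.Injective (φ.lTensor (R ⧸ I))) :
    Module.Flat R (F₀ ⧸ range φ) :=
  Module.Flat.iff_rTensor_injective'.2 fun I ↦
    φ.rTensor_injective_of_exact (exact_map_mkQ_range φ) (Submodule.mkQ_surjective _)
      I.injective_subtype (exact_subtype_mkQ I) I.mkQ_surjective (h I)

end LinearMap

/-- Let `R` be a noetherian commutative ring and `φ : F₁ → F₀` an
`R`-linear map between flat `R`-modules. If `κ(p) ⊗ φ` is injective for every prime
ideal `p`, then `φ` is injective and `Coker φ` is flat. -/
theorem stmt_7 (R : Type*) [CommRing R] [IsNoetherianRing R]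
    (F₁ F₀ : Type*) [AddCommGroup F₁] [Module R F₁] [AddCommGroup F₀] [Module R F₀]
    [Module.Flat R F₁] [Module.Flat R F₀] (φ : F₁ →ₗ[R] F₀)
    (h : ∀ (p : Ideal R) [p.IsPrime],
      Function.Injective (LinearMap.lTensor (kappa p) φ)) :
    Function.Injective φ ∧ Module.Flat R (F₀ ⧸ LinearMap.range φ) :=
  have hfin := φ.lTensor_injective_of_finite h
  ⟨φ.injective_of_lTensor_self_injective (hfin R),
    φ.flat_quotient_range_of_lTensor_quotient_injective fun I ↦ hfin (R ⧸ I)⟩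
end

section
/- Let R be a noetherian commutative ring and F a flat R-module. If κ(p) ⊗_R F = 0 for every prime ideal p of R, then F = 0. -/
/-!
If `F ≠ 0`, pick an associated prime `p` of `F`. After localizing, the maximal ideal `m` of
`A = R_p` is an associated prime of the flat `A`-module `A ⊗ F`, so some `y ≠ 0` is killed by `m`.
For a flat module the elements killed by a finitely generated ideal `I` lie in `(0 : I) • M`
(equational criterion of flatness). The hypothesis at `p` says `m • (A ⊗ F) = A ⊗ F`, hence
`y ∈ (0 : m) • m • (A ⊗ F) = 0`, a contradiction.
-/

open TensorProduct

namespace Module.Flat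

variable {A M : Type*} [CommRing A] [AddCommGroup M] [Module A M] [Module.Flat A M]

theorem mem_annihilator_smul_top_of_forall_smul_eq_zero {I : Ideal A} (hI : I.FG) {y : M}
    (hy : ∀ a ∈ I, a • y = 0) : y ∈ I.annihilator • (⊤ : Submodule A M) := by
  have : Module.Finite A I := .of_fg hI
  have hcomp : LinearMap.toSpanSingleton A M y ∘ₗ I.subtype = 0 := by
    ext ⟨a, ha⟩
    simpa using hy a ha
  obtain ⟨k, a, z, hyz, haI⟩ := exists_factorization_of_comp_eq_zero_of_free hcomp
  have hcoeff (j : Fin k) : a 1 j ∈ I.annihilator := by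
    refine Submodule.mem_annihilator.mpr fun i hi => ?_
    have : i • a 1 = 0 := by simpa [← map_smul] using LinearMap.congr_fun haI ⟨i, hi⟩
    simpa [mul_comm] using congr($this j)
  have hy1 : y = z (a 1) := by simpa using LinearMap.congr_fun hyz 1
  rw [hy1, ← (a 1).sum_single, map_finsuppSum]
  refine Submodule.sum_mem _ fun j _ => ?_
  dsimp only
  rw [← Finsupp.smul_single_one, map_smul]
  exact Submodule.smul_mem_smul (hcoeff j) Submodule.mem_top

theorem eq_zero_of_smul_top_eq_top {I : Ideal A} (hI : I.FG) (htop : I • (⊤ : Submodule A M) = ⊤)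
    {y : M} (hy : ∀ a ∈ I, a • y = 0) : y = 0 := by
  have hy' := mem_annihilator_smul_top_of_forall_smul_eq_zero hI hy
  rwa [← htop, ← Submodule.smul_assoc, Submodule.annihilator_smul, Submodule.bot_smul,
    Submodule.mem_bot] at hy'

theorem notMem_associatedPrimes_of_smul_top_eq_top [IsNoetherianRing A] {I : Ideal A}
    (htop : I • (⊤ : Submodule A M) = ⊤) : I ∉ associatedPrimes A M := by
  intro hI
  obtain ⟨hprime, y, rfl⟩ := isAssociatedPrime_iff.mp hI
  have hy : y = 0 := eq_zero_of_smul_top_eq_top (IsNoetherian.noetherian _) htop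
    fun a ha => Submodule.mem_colon_singleton.mp ha
  subst hy
  exact hprime.ne_top (by simp)

end Module.Flat

theorem IsLocalRing.maximalIdeal_smul_top_eq_top_of_subsingleton {A M : Type*} [CommRing A]
    [IsLocalRing A] [AddCommGroup M] [Module A M] [Subsingleton (ResidueField A ⊗[A] M)] :
    maximalIdeal A • (⊤ : Submodule A M) = ⊤ := by
  have : Subsingleton ((A ⧸ maximalIdeal A) ⊗[A] M) := ‹Subsingleton (ResidueField A ⊗[A] M)›
  exact Submodule.Quotient.subsingleton_iff.mp (quotTensorEquivQuotSMul M _).symm.subsingleton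

/-- If `F` is a flat module over a noetherian commutative ring `R`
and `κ(p) ⊗[R] F = 0` for every prime ideal `p`, then `F = 0`. -/
theorem stmt_9 (R : Type*) [CommRing R] [IsNoetherianRing R]
    (F : Type*) [AddCommGroup F] [Module R F] [Module.Flat R F]
    (h : ∀ (p : Ideal R) [p.IsPrime], Subsingleton (kappa p ⊗[R] F)) :
    Subsingleton F := by
  refine not_nontrivial_iff_subsingleton.mp fun hF => ?_
  obtain ⟨p, hp⟩ := associatedPrimes.nonempty R F
  have := hp.isPrime
  let A := Localization.AtPrime p
  have hm : IsLocalRing.maximalIdeal A ∈ associatedPrimes A (A ⊗[R] F) :=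
    Module.associatedPrimes.mem_associatedPrimes_of_comap_mem_associatedPrimes_of_isLocalizedModule
      p.primeCompl (TensorProduct.mk R A F 1) _
      (by rwa [← Ideal.under_def, Localization.AtPrime.under_maximalIdeal])
  have := h p
  have : Subsingleton (kappa p ⊗[A] (A ⊗[R] F)) :=
    (AlgebraTensorModule.cancelBaseChange R A A (kappa p) F).subsingleton
  exact Module.Flat.notMem_associatedPrimes_of_smul_top_eq_top
    IsLocalRing.maximalIdeal_smul_top_eq_top_of_subsingleton hm
end

section
/- Let R be a noetherian commutative ring and φ : F₁ → F₀ an R-linear map between flat R-modules. If for every prime ideal p of R the induced map κ(p) ⊗_R φ : κ(p) ⊗_R F₁ → κ(p) ⊗_R F₀ is bijective, then φ is bijective. -/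
/-!
Since `F₁` is flat and `R ⧸ p ↪ κ(p)`, the injectivity of `κ(p) ⊗ φ` gives that of
`(R ⧸ p) ⊗ φ`. Because `F₀` is flat, the class of modules `Q` for which `Q ⊗ φ` is injective
is closed under extensions (four lemma), so by dévissage over the noetherian ring `R` it
contains every finite module; `Q = R` gives the injectivity of `φ`. With `Q = R ⧸ I` it also
shows that `Tor₁(R ⧸ I, coker φ)` vanishes, so `coker φ` is flat. Its fibres
`κ(p) ⊗ coker φ = coker (κ(p) ⊗ φ)` vanish, and a flat module with vanishing fibres over a
noetherian ring is zero, by the same dévissage applied to the zero map `coker φ → 0`.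
-/

open TensorProduct

open LinearMap Function

universe u

variable {R : Type u} [CommRing R]

theorem LinearMap.injective_of_injective_of_injective_of_exact
    {A₁ B₁ C₁ A₂ B₂ C₂ : Type*} [AddCommGroup A₁] [Module R A₁] [AddCommGroup B₁] [Module R B₁]
    [AddCommGroup C₁] [Module R C₁] [AddCommGroup A₂] [Module R A₂] [AddCommGroup B₂]
    [Module R B₂] [AddCommGroup C₂] [Module R C₂]
    {f₁ : A₁ →ₗ[R] B₁} {g₁ : B₁ →ₗ[R] C₁} {f₂ : A₂ →ₗ[R] B₂} {g₂ : B₂ →ₗ[R] C₂}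
    {α : A₁ →ₗ[R] A₂} {β : B₁ →ₗ[R] B₂} {γ : C₁ →ₗ[R] C₂}
    (hf : β ∘ₗ f₁ = f₂ ∘ₗ α) (hg : γ ∘ₗ g₁ = g₂ ∘ₗ β) (h₁ : Exact f₁ g₁)
    (hf₂ : Injective f₂) (hα : Injective α) (hγ : Injective γ) : Injective β := by
  rw [injective_iff_map_eq_zero]
  intro b hb
  have hgb : g₁ b = 0 := hγ <| by rw [← comp_apply, hg, comp_apply, hb, map_zero, map_zero]
  obtain ⟨a, rfl⟩ := (h₁ b).mp hgb
  have ha : α a = 0 := hf₂ <| by rw [← comp_apply, ← hf, comp_apply, hb, map_zero]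
  rw [hα (ha.trans (map_zero α).symm), map_zero]

section Tensor

variable {M N : Type*} [AddCommGroup M] [Module R M] [AddCommGroup N] [Module R N]
  (φ : M →ₗ[R] N)

theorem LinearMap.lTensor_injective_of_exact_s10 [Module.Flat R N]
    {A B C : Type*} [AddCommGroup A] [Module R A] [AddCommGroup B] [Module R B]
    [AddCommGroup C] [Module R C] {i : A →ₗ[R] B} {π : B →ₗ[R] C}
    (hi : Injective i) (hπ : Surjective π) (hex : Exact i π)
    (hA : Injective (φ.lTensor A)) (hC : Injective (φ.lTensor C)) :
    Injective (φ.lTensor B) :=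
  injective_of_injective_of_injective_of_exact
    (by rw [lTensor_comp_rTensor, rTensor_comp_lTensor])
    (by rw [lTensor_comp_rTensor, rTensor_comp_lTensor])
    (rTensor_exact M hex hπ) (Module.Flat.rTensor_preserves_injective_linearMap i hi) hA hC

theorem LinearMap.lTensor_injective_of_injective [Module.Flat R M]
    {A B : Type*} [AddCommGroup A] [Module R A] [AddCommGroup B] [Module R B]
    {i : A →ₗ[R] B} (hi : Injective i) (hB : Injective (φ.lTensor B)) :
    Injective (φ.lTensor A) := by
  refine Injective.of_comp (f := rTensor N i) ?_
  rw [← coe_comp, rTensor_comp_lTensor, ← lTensor_comp_rTensor, coe_comp]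
  exact hB.comp (Module.Flat.rTensor_preserves_injective_linearMap i hi)

theorem LinearMap.lTensor_quotient_injective_of_residueField [Module.Flat R M]
    (p : Ideal R) [p.IsPrime] (h : Injective (φ.lTensor p.ResidueField)) :
    Injective (φ.lTensor (R ⧸ p)) :=
  φ.lTensor_injective_of_injective
    (i := (IsScalarTower.toAlgHom R (R ⧸ p) p.ResidueField).toLinearMap)
    p.injective_algebraMap_quotient_residueField h

theorem LinearMap.lTensor_injective_of_forall_prime [IsNoetherianRing R] [Module.Flat R N]
    (hφ : ∀ (p : Ideal R) [p.IsPrime], Injective (φ.lTensor (R ⧸ p)))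
    (Q : Type u) [AddCommGroup Q] [Module R Q] [Module.Finite R Q] :
    Injective (φ.lTensor Q) := by
  induction ‹Module.Finite R Q› using
    IsNoetherianRing.induction_on_isQuotientEquivQuotientPrime R with
  | subsingleton Q => exact injective_of_subsingleton _
  | quotient Q p e =>
    exact φ.lTensor_injective_of_exact_s10 e.symm.injective
      (surjective_to_subsingleton (0 : Q →ₗ[R] PUnit))
      ((exact_zero_iff_surjective _ _).2 e.symm.surjective) (hφ p.1)
      (injective_of_subsingleton _)
  | exact Q₁ Q₂ Q₃ i π hi hπ hex h₁ h₃ => exact φ.lTensor_injective_of_exact_s10 hi hπ hex h₁ h₃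

theorem LinearMap.injective_of_lTensor_self_injective_s10 (h : Injective (φ.lTensor R)) :
    Injective φ := by
  have hφ : ⇑φ = TensorProduct.lid R N ∘ φ.lTensor R ∘ (TensorProduct.lid R M).symm := by
    ext x; simp
  rw [hφ]
  exact (TensorProduct.lid R N).injective.comp (h.comp (TensorProduct.lid R M).symm.injective)

theorem Module.Flat.quotient_range_of_lTensor_injective [Module.Flat R N]
    (hφ : ∀ I : Ideal R, Function.Injective (φ.lTensor (R ⧸ I))) :
    Module.Flat R (N ⧸ range φ) := by
  rw [Module.Flat.iff_lTensor_injective']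
  intro I
  exact lTensor_injective_of_exact_of_exact_of_rTensor_injective (exact_map_mkQ_range φ)
    (Submodule.mkQ_surjective _) (exact_subtype_mkQ I) (Submodule.mkQ_surjective _)
    ((φ.lTensor_inj_iff_rTensor_inj _).mp (hφ I))
    (Module.Flat.lTensor_preserves_injective_linearMap _ I.injective_subtype)

theorem LinearMap.subsingleton_lTensor_quotient_range (Q : Type*) [AddCommGroup Q] [Module R Q]
    (h : Surjective (φ.lTensor Q)) : Subsingleton (Q ⊗[R] (N ⧸ range φ)) := by
  refine subsingleton_of_forall_eq 0 fun z ↦ ?_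
  obtain ⟨x, rfl⟩ := lTensor_surjective Q (Submodule.mkQ_surjective (range φ)) z
  obtain ⟨y, rfl⟩ := h x
  exact (lTensor_exact Q (exact_map_mkQ_range φ) (Submodule.mkQ_surjective _)).apply_apply_eq_zero y

end Tensor

theorem Module.Flat.subsingleton_of_forall_residueField_tensor [IsNoetherianRing R]
    (M : Type*) [AddCommGroup M] [Module R M] [Module.Flat R M]
    (h : ∀ (p : Ideal R) [p.IsPrime], Subsingleton (p.ResidueField ⊗[R] M)) :
    Subsingleton M := by
  have hR : Function.Injective ((0 : M →ₗ[R] PUnit).lTensor R) :=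
    lTensor_injective_of_forall_prime _
      (fun p _ ↦ lTensor_quotient_injective_of_residueField _ p (injective_of_subsingleton _)) R
  have := hR.subsingleton
  exact (TensorProduct.lid R M).symm.injective.subsingleton

/-- Let `R` be a noetherian commutative ring and `φ : F₁ → F₀` an
`R`-linear map between flat `R`-modules. If `κ(p) ⊗ φ` is bijective for every prime
ideal `p`, then `φ` is bijective. -/
theorem stmt_10 (R : Type*) [CommRing R] [IsNoetherianRing R]
    (F₁ F₀ : Type*) [AddCommGroup F₁] [Module R F₁] [AddCommGroup F₀] [Module R F₀]
    [Module.Flat R F₁] [Module.Flat R F₀] (φ : F₁ →ₗ[R] F₀)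
    (h : ∀ (p : Ideal R) [p.IsPrime],
      Function.Bijective (LinearMap.lTensor (kappa p) φ)) :
    Function.Bijective φ := by
  have hquot : ∀ (p : Ideal R) [p.IsPrime], Injective (φ.lTensor (R ⧸ p)) :=
    fun p _ ↦ φ.lTensor_quotient_injective_of_residueField p (h p).1
  have hfin : ∀ (Q : Type _) [AddCommGroup Q] [Module R Q] [Module.Finite R Q],
      Injective (φ.lTensor Q) := fun Q _ _ _ ↦ φ.lTensor_injective_of_forall_prime hquot Q
  have : Module.Flat R (F₀ ⧸ range φ) :=
    Module.Flat.quotient_range_of_lTensor_injective φ fun I ↦ hfin (R ⧸ I)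
  have hcoker : Subsingleton (F₀ ⧸ range φ) :=
    Module.Flat.subsingleton_of_forall_residueField_tensor _
      fun p _ ↦ φ.subsingleton_lTensor_quotient_range _ (h p).2
  exact ⟨φ.injective_of_lTensor_self_injective_s10 (hfin R),
    range_eq_top.mp (Submodule.Quotient.subsingleton_iff.mp hcoker)⟩
end
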